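/- arXiv:0706.0534 — 2 statements merged into one kernel-verified Lean document; each statement's English description precedes it below -/
import Mathlib

section
/- Let X be an n × p matrix and S ⊆ {1,…,p} nonempty with complement Sᶜ. If X is S-incoherent, i.e. ‖(1/n) X_{Sᶜ}ᵀ X_S‖_∞ + ‖(1/n) X_Sᵀ X_S − I_{|S|}‖_∞ ≤ 1 − η for some η ∈ (0,1], then ‖X_{Sᶜ}ᵀ X_S (X_Sᵀ X_S)⁻¹‖_∞ ≤ 1 − η. -/
/-!
Put `A = (1/n) X_Sᵀ X_S` and `B = (1/n) X_{Sᶜ}ᵀ X_S`; the scalar cancels, so the matrix to bound is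
`B A⁻¹`. Writing `a = ‖A - 1‖_∞ < 1`, the Neumann series gives `‖A⁻¹‖_∞ ≤ 1 / (1 - a)`, hence
`‖B A⁻¹‖_∞ ≤ (1 - η - a) / (1 - a) ≤ 1 - η`. For `n = 0` the matrix `X_S` is empty and there is
nothing to prove.
-/

open scoped BigOperators
open Matrix

/-- The matrix ∞-norm (maximum absolute row sum); the supremum over an empty
index type is `0`. -/
noncomputable def infNorm {α β : Type*} [Fintype α] [Fintype β]
    (A : Matrix α β ℝ) : ℝ := ⨆ i, ∑ j, |A i j|

attribute [local instance] Matrix.linftyOpNormedAddCommGroup Matrix.linftyOpNormedRing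

namespace Matrix

variable {l m n : Type*} [Fintype m]

theorem infNorm_eq_linfty_opNorm [Fintype n] (A : Matrix m n ℝ) : infNorm A = ‖A‖ := by
  rcases isEmpty_or_nonempty m with hm | hm
  · simp [infNorm, Subsingleton.elim A 0, Real.iSup_of_isEmpty]
  · rw [infNorm, linfty_opNorm_def, ← Finset.sup'_eq_sup Finset.univ_nonempty,
      Finset.apply_sup'_eq_sup'_comp _ _ NNReal.coe_max, Finset.sup'_univ_eq_ciSup]
    simp [Real.norm_eq_abs]

theorem linfty_opNorm_one_le [DecidableEq m] : ‖(1 : Matrix m m ℝ)‖ ≤ 1 := by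
  rcases isEmpty_or_nonempty m with hm | hm
  · simp [Subsingleton.elim (1 : Matrix m m ℝ) 0]
  · exact norm_one.le

theorem smul_mul_inv_smul {K : Type*} [Field K] [DecidableEq m] {c : K} (hc : c ≠ 0)
    (B : Matrix l m K) (A : Matrix m m K) : c • B * (c • A)⁻¹ = B * A⁻¹ := by
  by_cases hA : IsUnit A.det
  · have := invertibleOfNonzero hc
    rw [Matrix.inv_smul A c hA, Matrix.smul_mul, Matrix.mul_smul, smul_smul, mul_invOf_self,
      one_smul]
  · have hcA : ¬IsUnit (c • A).det := by
      rwa [det_smul, IsUnit.mul_iff, not_and_or, or_iff_right (not_not.2 (hc.isUnit.pow _))]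
    rw [nonsing_inv_apply_not_isUnit _ hA, nonsing_inv_apply_not_isUnit _ hcA, Matrix.mul_zero,
      Matrix.mul_zero]

theorem linfty_opNorm_inv_one_sub_le [DecidableEq m] (t : Matrix m m ℝ) (h : ‖t‖ < 1) :
    ‖(1 - t)⁻¹‖ ≤ (1 - ‖t‖)⁻¹ := by
  have : HasSummableGeomSeries (Matrix m m ℝ) := by
    let := (Matrix.linftyOpNormedSpace : NormedSpace ℝ (Matrix m m ℝ))
    have := FiniteDimensional.complete ℝ (Matrix m m ℝ)
    infer_instance
  rw [nonsing_inv_eq_ringInverse, NormedRing.inverse_one_sub _ h]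
  refine (tsum_geometric_le_of_norm_lt_one t h).trans ?_
  linarith [linfty_opNorm_one_le (m := m)]

theorem linfty_opNorm_mul_inv_le [Fintype l] [DecidableEq m] (B : Matrix l m ℝ)
    (A : Matrix m m ℝ) {η : ℝ} (hη : 0 < η) (h : ‖B‖ + ‖A - 1‖ ≤ 1 - η) : ‖B * A⁻¹‖ ≤ 1 - η := by
  have hA : ‖A - 1‖ < 1 := by linarith [norm_nonneg B]
  have hpos : 0 < 1 - ‖A - 1‖ := by linarith
  have hinv : ‖A⁻¹‖ ≤ (1 - ‖A - 1‖)⁻¹ := by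
    have := linfty_opNorm_inv_one_sub_le (1 - A) (by rwa [norm_sub_rev])
    rwa [sub_sub_cancel, norm_sub_rev] at this
  calc ‖B * A⁻¹‖ ≤ ‖B‖ * ‖A⁻¹‖ := linfty_opNorm_mul _ _
    _ ≤ ‖B‖ * (1 - ‖A - 1‖)⁻¹ := by gcongr
    _ ≤ 1 - η := by
      rw [← div_eq_mul_inv, div_le_iff₀ hpos]
      nlinarith [norm_nonneg (A - 1)]

end Matrix

theorem incoherence_implies_irrepresentable_general {n p : ℕ}
    (S : Finset (Fin p))
    (η : ℝ) (hη : 0 < η)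
    (XS : Matrix (Fin n) {j // j ∈ S} ℝ)
    (XSc : Matrix (Fin n) {j // j ∈ Sᶜ} ℝ)
    (hinc : infNorm ((1 / (n : ℝ)) • (XScᵀ * XS)) +
        infNorm ((1 / (n : ℝ)) • (XSᵀ * XS) - 1) ≤ 1 - η) :
    infNorm (XScᵀ * XS * (XSᵀ * XS)⁻¹) ≤ 1 - η := by
  simp only [infNorm_eq_linfty_opNorm] at hinc ⊢
  rcases Nat.eq_zero_or_pos n with rfl | hn
  · rw [Subsingleton.elim XS 0, Matrix.mul_zero, Matrix.zero_mul, norm_zero]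
    linarith [norm_nonneg ((1 / (0 : ℝ)) • (XScᵀ * XS)),
      norm_nonneg ((1 / (0 : ℝ)) • (XSᵀ * XS) - 1)]
  · rw [← smul_mul_inv_smul (one_div_ne_zero (Nat.cast_ne_zero.2 hn.ne'))]
    exact linfty_opNorm_mul_inv_le _ _ hη hinc

/-- S-incoherence implies `‖X_{Sᶜ}ᵀ X_S (X_Sᵀ X_S)⁻¹‖_∞ ≤ 1 − η`. -/
theorem incoherence_implies_irrepresentable {n p : ℕ}
    (X : Matrix (Fin n) (Fin p) ℝ) (S : Finset (Fin p)) (hS : S.Nonempty)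
    (η : ℝ) (hη : 0 < η) (hη1 : η ≤ 1)
    (XS : Matrix (Fin n) {j // j ∈ S} ℝ)
    (XSc : Matrix (Fin n) {j // j ∈ Sᶜ} ℝ)
    (hXS : ∀ i j, XS i j = X i j) (hXSc : ∀ i j, XSc i j = X i j)
    (hinc : infNorm ((1 / (n : ℝ)) • (XScᵀ * XS)) +
        infNorm ((1 / (n : ℝ)) • (XSᵀ * XS) - 1) ≤ 1 - η) :
    infNorm (XScᵀ * XS * (XSᵀ * XS)⁻¹) ≤ 1 - η :=
  incoherence_implies_irrepresentable_general S η hη XS XSc hinc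
end

section
/- For a chi-square random variable χ²_n with n degrees of freedom: P(χ²_n/n − 1 < −ε) ≤ exp(−nε²/4) for 0 ≤ ε ≤ 1, and P(χ²_n/n − 1 > ε) ≤ exp(−3nε²/16) for 0 ≤ ε ≤ 1/2. -/
/-!
The moment generating function of `χ²_n` is `(1 - 2t)^(-n/2)` for `t < 1/2`. Chernoff's bound
with `t = ∓ε / (2(1 ∓ ε))` bounds the two tails by `(exp (±ε/2) · √(1 ∓ ε))^n`, and the elementary
inequalities `log (1 - x) ≤ -x - x²/2` and `log (1 + x) ≤ x - 3x²/8` (for `0 ≤ x ≤ 1/2`) turn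
these into `exp (-nε²/4)` and `exp (-3nε²/16)`.
-/

open MeasureTheory ProbabilityTheory Real Finset

lemma one_sub_le_exp_neg_sub_sq_div_two {x : ℝ} (hx : 0 ≤ x) : 1 - x ≤ exp (-x - x ^ 2 / 2) := by
  rcases lt_or_ge x 1 with hx1 | hx1
  · have hlog : x + x ^ 2 / 2 ≤ -log (1 - x) := by
      have hs := hasSum_pow_div_log_of_abs_lt_one (abs_lt.mpr ⟨by linarith, hx1⟩)
      calc x + x ^ 2 / 2 = ∑ i ∈ range 2, x ^ (i + 1) / (i + 1) := by norm_num [sum_range_succ]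
        _ ≤ -log (1 - x) := sum_le_hasSum (range 2) (fun i _ ↦ by positivity) hs
    calc 1 - x = exp (log (1 - x)) := (exp_log (by linarith)).symm
      _ ≤ exp (-x - x ^ 2 / 2) := exp_le_exp.mpr (by linarith)
  · exact (sub_nonpos.mpr hx1).trans (exp_pos _).le

lemma one_add_le_exp_sub_three_mul_sq_div_eight {x : ℝ} (h0 : 0 ≤ x) (h1 : x ≤ 1 / 2) :
    1 + x ≤ exp (x - 3 * x ^ 2 / 8) := by
  have hy : 0 ≤ x - 3 * x ^ 2 / 8 := by nlinarith
  have h := sum_le_exp_of_nonneg hy 5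
  norm_num [sum_range_succ, Nat.factorial] at h
  -- `key` is (Taylor polynomial of degree 4 at `x - 3x²/8` minus `1 + x`) / x²; the margin is
  -- tiny near `x = 1/2` (`log (3/2) ≈ 0.4055` against `1/2 - 3/32 = 0.40625`).
  have key : 0 ≤ 1 / 8 - 5 / 24 * x - 29 / 384 * x ^ 2 + 1 / 128 * x ^ 3 + 27 / 1024 * x ^ 4
      - 9 / 1024 * x ^ 5 + 27 / 32768 * x ^ 6 := by
    have h2 : 0 ≤ 1 - 2 * x := by linarith
    nlinarith [mul_nonneg h0 h2, mul_nonneg (mul_nonneg h0 h0) h2, pow_nonneg h0 3,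
      pow_le_one₀ (n := 4) h0 (by linarith)]
  nlinarith [h, mul_nonneg (mul_nonneg h0 h0) key]

-- For `t ≥ 1/2` both sides are junk zeros: the integrand is not integrable and `√` of a
-- nonpositive number is `0`.
lemma integral_exp_mul_sq_gaussianReal (t : ℝ) :
    ∫ x, exp (t * x ^ 2) ∂gaussianReal 0 1 = (√(1 - 2 * t))⁻¹ := by
  have hpdf (x : ℝ) : gaussianPDFReal 0 1 x • exp (t * x ^ 2) =
      (√(2 * π))⁻¹ * exp (-(1 / 2 - t) * x ^ 2) := by
    rw [gaussianPDFReal_def, smul_eq_mul, mul_assoc, ← exp_add]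
    push_cast
    ring_nf
  simp_rw [integral_gaussianReal_eq_integral_smul one_ne_zero, hpdf, integral_const_mul,
    integral_gaussian]
  rw [show π / (1 / 2 - t) = 2 * π / (1 - 2 * t) by field_simp, sqrt_div (by positivity),
    div_eq_mul_inv, ← mul_assoc, inv_mul_cancel₀ (by positivity), one_mul]

section

variable {Ω : Type*} {mΩ : MeasurableSpace Ω} {μ : Measure Ω}

lemma mgf_sq_of_map_eq_gaussianReal {X : Ω → ℝ} (hX : μ.map X = gaussianReal 0 1) (t : ℝ) :
    mgf (fun ω ↦ X ω ^ 2) μ t = (√(1 - 2 * t))⁻¹ := by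
  have hXm : AEMeasurable X μ := .of_map_ne_zero (by simp [hX, NeZero.ne])
  rw [← integral_exp_mul_sq_gaussianReal, ← hX]
  exact (mgf_map (X := fun x ↦ x ^ 2) hXm (by fun_prop)).symm

lemma mgf_sum_sq_of_map_eq_gaussianReal {ι : Type*} [Fintype ι] {Y : ι → Ω → ℝ}
    (hY : iIndepFun Y μ) (hgauss : ∀ i, μ.map (Y i) = gaussianReal 0 1) (t : ℝ) :
    mgf (fun ω ↦ ∑ i, Y i ω ^ 2) μ t = (√(1 - 2 * t))⁻¹ ^ Fintype.card ι := by
  have hYm (i : ι) : AEMeasurable (Y i) μ := .of_map_ne_zero (by simp [hgauss i, NeZero.ne])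
  have hsq : iIndepFun (fun i ω ↦ Y i ω ^ 2) μ := hY.comp (fun _ x ↦ x ^ 2) (fun _ ↦ by fun_prop)
  rw [← sum_fn, hsq.mgf_sum₀ (fun i ↦ (hYm i).pow_const 2)]
  simp [mgf_sq_of_map_eq_gaussianReal (hgauss _)]

variable [IsProbabilityMeasure μ] {S : Ω → ℝ} {n : ℕ} {ε : ℝ}

lemma integrable_exp_mul_of_mgf_eq (hS : ∀ t, mgf S μ t = (√(1 - 2 * t))⁻¹ ^ n) {t : ℝ}
    (ht : t < 1 / 2) : Integrable (fun ω ↦ exp (t * S ω)) μ :=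
  mgf_pos_iff.mp (by rw [hS]; exact pow_pos (inv_pos.mpr (sqrt_pos.mpr (by linarith))) n)

lemma measureReal_le_le_of_mgf_eq (hS : ∀ t, mgf S μ t = (√(1 - 2 * t))⁻¹ ^ n)
    (hε0 : 0 ≤ ε) (hε1 : ε < 1) :
    μ.real {ω | S ω ≤ n * (1 - ε)} ≤ exp (-n * ε ^ 2 / 4) := by
  set t := -ε / (2 * (1 - ε)) with ht_def
  have h1ε : 0 < 1 - ε := by linarith
  have ht0 : t ≤ 0 := div_nonpos_of_nonpos_of_nonneg (by linarith) (by linarith)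
  have h12t : 1 - 2 * t = (1 - ε)⁻¹ := by rw [ht_def]; field_simp; ring
  have hexp : -t * (n * (1 - ε)) = n * (ε / 2) := by rw [ht_def]; field_simp
  calc μ.real {ω | S ω ≤ n * (1 - ε)}
      ≤ exp (-t * (n * (1 - ε))) * mgf S μ t :=
        measure_le_le_exp_mul_mgf _ ht0 (integrable_exp_mul_of_mgf_eq hS (by linarith))
    _ = (exp (ε / 2) * √(1 - ε)) ^ n := by
        rw [hS, h12t, sqrt_inv, inv_inv, hexp, exp_nat_mul, mul_pow]
    _ ≤ (exp (ε / 2) * exp ((-ε - ε ^ 2 / 2) / 2)) ^ n := by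
        gcongr
        rw [exp_half]
        exact sqrt_le_sqrt (one_sub_le_exp_neg_sub_sq_div_two hε0)
    _ = exp (-n * ε ^ 2 / 4) := by rw [← exp_add, ← exp_nat_mul]; ring_nf

lemma measureReal_lt_le_of_mgf_eq (hS0 : 0 ≤ S) (hS : ∀ t, mgf S μ t = (√(1 - 2 * t))⁻¹ ^ n)
    (hε0 : 0 ≤ ε) (hε1 : ε ≤ 1) :
    μ.real {ω | S ω < n * (1 - ε)} ≤ exp (-n * ε ^ 2 / 4) := by
  rcases hε1.lt_or_eq with hε1 | rfl
  · exact (measureReal_mono fun ω (hω : S ω < _) ↦ hω.le).trans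
      (measureReal_le_le_of_mgf_eq hS hε0 hε1)
  · have hempty : {ω | S ω < 0} = ∅ :=
      Set.eq_empty_of_forall_notMem fun ω (hω : S ω < 0) ↦ (hS0 ω).not_gt hω
    simp [hempty, exp_nonneg]

lemma measureReal_ge_le_of_mgf_eq (hS : ∀ t, mgf S μ t = (√(1 - 2 * t))⁻¹ ^ n)
    (hε0 : 0 ≤ ε) (hε1 : ε ≤ 1 / 2) :
    μ.real {ω | n * (1 + ε) ≤ S ω} ≤ exp (-3 * n * ε ^ 2 / 16) := by
  set t := ε / (2 * (1 + ε)) with ht_def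
  have ht0 : 0 ≤ t := by positivity
  have ht : t < 1 / 2 := by rw [ht_def, div_lt_iff₀ (by positivity)]; linarith
  have h12t : 1 - 2 * t = (1 + ε)⁻¹ := by rw [ht_def]; field_simp; ring
  have hexp : -t * (n * (1 + ε)) = n * (-(ε / 2)) := by rw [ht_def]; field_simp
  calc μ.real {ω | n * (1 + ε) ≤ S ω}
      ≤ exp (-t * (n * (1 + ε))) * mgf S μ t :=
        measure_ge_le_exp_mul_mgf _ ht0 (integrable_exp_mul_of_mgf_eq hS ht)
    _ = (exp (-(ε / 2)) * √(1 + ε)) ^ n := by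
        rw [hS, h12t, sqrt_inv, inv_inv, hexp, exp_nat_mul, mul_pow]
    _ ≤ (exp (-(ε / 2)) * exp ((ε - 3 * ε ^ 2 / 8) / 2)) ^ n := by
        gcongr
        rw [exp_half]
        exact sqrt_le_sqrt (one_add_le_exp_sub_three_mul_sq_div_eight hε0 hε1)
    _ = exp (-3 * n * ε ^ 2 / 16) := by rw [← exp_add, ← exp_nat_mul]; ring_nf

end

theorem chi_square_tail_bounds_general {Ω : Type*} [MeasureSpace Ω]
    {n : ℕ} (hn : 0 < n)
    (Y : Fin n → Ω → ℝ)
    (hindep : iIndepFun Y ℙ)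
    (hgauss : ∀ i, Measure.map (Y i) ℙ = gaussianReal 0 1)
    (ε : ℝ) (hε : 0 ≤ ε) :
    (ε ≤ 1 →
      (ℙ {ω | (∑ i, Y i ω ^ 2) / n - 1 < -ε}).toReal ≤
        Real.exp (-(n : ℝ) * ε ^ 2 / 4)) ∧
    (ε ≤ 1 / 2 →
      (ℙ {ω | 1 + ε < (∑ i, Y i ω ^ 2) / n}).toReal ≤
        Real.exp (-(3 : ℝ) * n * ε ^ 2 / 16)) := by
  have := hindep.isProbabilityMeasure
  have hmgf := mgf_sum_sq_of_map_eq_gaussianReal hindep hgauss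
  rw [Fintype.card_fin] at hmgf
  have hnR : (0 : ℝ) < n := by exact_mod_cast hn
  refine ⟨fun hε1 ↦ ?_, fun hε2 ↦ ?_⟩
  · calc (ℙ : Measure Ω).real {ω | (∑ i, Y i ω ^ 2) / n - 1 < -ε}
        ≤ (ℙ : Measure Ω).real {ω | ∑ i, Y i ω ^ 2 < n * (1 - ε)} := by
          refine measureReal_mono fun ω hω ↦ ?_
          simp only [Set.mem_ofPred_eq, div_sub_one hnR.ne', div_lt_iff₀ hnR] at hω ⊢
          linarith
      _ ≤ _ := measureReal_lt_le_of_mgf_eq (fun ω ↦ by positivity) hmgf hε hε1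
  · calc (ℙ : Measure Ω).real {ω | 1 + ε < (∑ i, Y i ω ^ 2) / n}
        ≤ (ℙ : Measure Ω).real {ω | n * (1 + ε) ≤ ∑ i, Y i ω ^ 2} := by
          refine measureReal_mono fun ω hω ↦ ?_
          simp only [Set.mem_ofPred_eq, lt_div_iff₀ hnR] at hω ⊢
          linarith
      _ ≤ _ := measureReal_ge_le_of_mgf_eq hmgf hε hε2

/-- Chi-square tail bounds: for `χ²_n = Σ Y_i²` with `Y_i` i.i.d. standard normal,
`P(χ²_n/n − 1 < −ε) ≤ exp(−nε²/4)` for `0 ≤ ε ≤ 1` and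
`P(χ²_n/n − 1 > ε) ≤ exp(−3nε²/16)` for `0 ≤ ε ≤ 1/2`. -/
theorem chi_square_tail_bounds {Ω : Type*} [MeasureSpace Ω]
    (hprob : IsProbabilityMeasure (ℙ : Measure Ω))
    {n : ℕ} (hn : 0 < n)
    (Y : Fin n → Ω → ℝ)
    (hmeas : ∀ i, Measurable (Y i))
    (hindep : iIndepFun Y ℙ)
    (hgauss : ∀ i, Measure.map (Y i) ℙ = gaussianReal 0 1)
    (ε : ℝ) (hε : 0 ≤ ε) :
    (ε ≤ 1 →
      (ℙ {ω | (∑ i, Y i ω ^ 2) / n - 1 < -ε}).toReal ≤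
        Real.exp (-(n : ℝ) * ε ^ 2 / 4)) ∧
    (ε ≤ 1 / 2 →
      (ℙ {ω | 1 + ε < (∑ i, Y i ω ^ 2) / n}).toReal ≤
        Real.exp (-(3 : ℝ) * n * ε ^ 2 / 16)) :=
  chi_square_tail_bounds_general hn Y hindep hgauss ε hε
end
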